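/- Let p₁, ..., p_s be distinct primes and a₁,...,a_s nonzero integers, b₁,...,b_s positive integers with gcd(a_i,b_i)=1. Then the real number p₁^{a₁/b₁} ··· p_s^{a_s/b_s} is algebraic over ℚ of degree exactly lcm(b₁,...,b_s). -/

import Mathlib

/-!
With `N = lcm bᵢ`, the number `x = ∏ pᵢ ^ (aᵢ / bᵢ)` satisfies `x ^ N = q ∈ ℚ`, so its degree `d`
is at most `N`. All complex conjugates of `x` are `N`-th roots of `q`, hence have absolute
value `x`, so `x ^ d = |constant coefficient of the minimal polynomial|` is rational. Comparing
`pⱼ`-adic valuations in `(x ^ d) ^ N = q ^ d` gives `bⱼ ∣ d * aⱼ`, hence `bⱼ ∣ d` by coprimality,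
and so `N ∣ d`.
-/

open Polynomial

theorem padicValRat_finset_prod {p : ℕ} [Fact p.Prime] {ι : Type*} (s : Finset ι) {f : ι → ℚ}
    (hf : ∀ i ∈ s, f i ≠ 0) :
    padicValRat p (∏ i ∈ s, f i) = ∑ i ∈ s, padicValRat p (f i) := by
  classical
  induction s using Finset.induction_on with
  | empty => simp
  | insert i s his ih =>
    have hs : ∀ j ∈ s, f j ≠ 0 := fun j hj => hf j (Finset.mem_insert_of_mem hj)
    rw [Finset.prod_insert his, Finset.sum_insert his,
      padicValRat.mul (hf i (Finset.mem_insert_self i s)) (Finset.prod_ne_zero_iff.2 hs), ih hs]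

theorem padicValRat_prod_zpow_primes {ι : Type*} [Fintype ι] {p : ι → ℕ}
    (hp : ∀ i, (p i).Prime) (hinj : Function.Injective p) (c : ι → ℤ) (j : ι) :
    padicValRat (p j) (∏ i, (p i : ℚ) ^ c i) = c j := by
  have : Fact (p j).Prime := ⟨hp j⟩
  have hp0 : ∀ i, (p i : ℚ) ≠ 0 := fun i => by exact_mod_cast (hp i).ne_zero
  rw [padicValRat_finset_prod _ fun i _ => zpow_ne_zero _ (hp0 i),
    Finset.sum_eq_single_of_mem j (Finset.mem_univ j)]
  · simp [padicValRat.self (hp j).one_lt]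
  · intro i _ hij
    have hndvd : ¬ p j ∣ p i := fun h =>
      hij (hinj ((Nat.prime_dvd_prime_iff_eq (hp j) (hp i)).1 h)).symm
    simp [padicValNat.eq_zero_of_not_dvd hndvd]

theorem intCast_dvd_of_prod_zpow_primes_eq_pow {ι : Type*} [Fintype ι] {p : ι → ℕ}
    (hp : ∀ i, (p i).Prime) (hinj : Function.Injective p) {c : ι → ℤ} {r : ℚ}
    {n : ℕ} (h : ∏ i, (p i : ℚ) ^ c i = r ^ n) (j : ι) : (n : ℤ) ∣ c j := by
  have : Fact (p j).Prime := ⟨hp j⟩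
  refine ⟨padicValRat (p j) r, ?_⟩
  rw [← padicValRat_prod_zpow_primes hp hinj c j, h, ← zpow_natCast, padicValRat.zpow]

theorem Real.rpow_intCast_div_natCast_pow_mul {y : ℝ} (hy : 0 ≤ y) (a : ℤ) (b k : ℕ) (hb : b ≠ 0) :
    (y ^ ((a : ℝ) / b)) ^ (b * k) = y ^ (a * k) := by
  rw [← Real.rpow_natCast, ← Real.rpow_mul hy, ← Real.rpow_intCast]
  congr 1
  push_cast
  field_simp

theorem Complex.norm_coeff_zero_eq_pow_natDegree {P : ℂ[X]} (hP : P.Monic) {c : ℝ}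
    (hroots : ∀ z ∈ P.roots, ‖z‖ = c) : ‖P.coeff 0‖ = c ^ P.natDegree := by
  have hsplits : P.Splits := IsAlgClosed.splits P
  rw [hsplits.coeff_zero_eq_prod_roots_of_monic hP, norm_mul, norm_pow, norm_neg, norm_one,
    one_pow, one_mul, ← normHom_apply, map_multiset_prod,
    Multiset.eq_replicate_of_mem (s := P.roots.map normHom) (a := c)
      (Multiset.forall_mem_map_iff.2 hroots),
    Multiset.prod_replicate, Multiset.card_map, ← hsplits.natDegree_eq_card_roots]

theorem isIntegral_of_pow_eq_algebraMap {R A : Type*} [CommRing R] [Ring A] [Algebra R A]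
    {x : A} {n : ℕ} (hn : n ≠ 0) {r : R} (h : x ^ n = algebraMap R A r) : IsIntegral R x :=
  IsIntegral.of_pow (Nat.pos_of_ne_zero hn) (h ▸ isIntegral_algebraMap)

theorem natDegree_minpoly_le_of_pow_eq_algebraMap {K A : Type*} [Field K] [Ring A] [Algebra K A]
    {x : A} {n : ℕ} (hn : n ≠ 0) {q : K} (h : x ^ n = algebraMap K A q) :
    (minpoly K x).natDegree ≤ n := by
  have hroot : aeval x (X ^ n - C q) = 0 := by simp [h]
  simpa [natDegree_X_pow_sub_C] using
    natDegree_le_of_dvd (minpoly.dvd K x hroot) (X_pow_sub_C_ne_zero (Nat.pos_of_ne_zero hn) q)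

/-- The complex conjugates of `x` are `n`-th roots of `q`, hence all of absolute value `x`. -/
theorem pow_natDegree_minpoly_eq_abs_coeff_zero {x : ℝ} (hx : 0 ≤ x) {n : ℕ} (hn : n ≠ 0) {q : ℚ}
    (h : x ^ n = q) : x ^ (minpoly ℚ x).natDegree = |(minpoly ℚ x).coeff 0| := by
  have h' : x ^ n = algebraMap ℚ ℝ q := by rw [h, eq_ratCast]
  have hint := isIntegral_of_pow_eq_algebraMap hn h'
  have hroots : ∀ z ∈ ((minpoly ℚ x).map (algebraMap ℚ ℂ)).roots, ‖z‖ = x := by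
    intro z hz
    have hdvd : minpoly ℚ x ∣ X ^ n - C q := minpoly.dvd ℚ x (by simp [h'])
    have hzn : z ^ n = (x : ℂ) ^ n := by
      have := eval_eq_zero_of_dvd_of_eval_eq_zero (Polynomial.map_dvd (algebraMap ℚ ℂ) hdvd)
        (isRoot_of_mem_roots hz)
      simp only [Polynomial.map_sub, Polynomial.map_pow, map_X, map_C, eval_sub, eval_pow,
        eval_X, eval_C, sub_eq_zero] at this
      rw [this, eq_ratCast]
      exact_mod_cast h.symm
    have := congrArg norm hzn
    rw [norm_pow, norm_pow, Complex.norm_real, Real.norm_of_nonneg hx] at this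
    exact (pow_left_inj₀ (norm_nonneg z) hx hn).1 this
  have := Complex.norm_coeff_zero_eq_pow_natDegree ((minpoly.monic hint).map _) hroots
  rw [natDegree_map, coeff_map, eq_ratCast, ← Complex.ofReal_ratCast, Complex.norm_real,
    Real.norm_eq_abs, ← Rat.cast_abs] at this
  rw [← this, Rat.cast_abs]

theorem prod_rpow_div_pow_lcm {ι : Type*} [Fintype ι] (p : ι → ℕ) (a : ι → ℤ) {b : ι → ℕ}
    (hb : ∀ i, b i ≠ 0) :
    (∏ i, (p i : ℝ) ^ ((a i : ℝ) / b i)) ^ Finset.univ.lcm b =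
      ((∏ i, (p i : ℚ) ^ (a i * (Finset.univ.lcm b / b i : ℕ)) : ℚ) : ℝ) := by
  rw [← Finset.prod_pow]
  push_cast
  refine Finset.prod_congr rfl fun i _ => ?_
  conv_lhs => rw [← Nat.mul_div_cancel' (Finset.dvd_lcm (Finset.mem_univ i))]
  exact Real.rpow_intCast_div_natCast_pow_mul (Nat.cast_nonneg _) _ _ _ (hb i)

theorem dvd_of_prod_rpow_div_pow_eq_ratCast {ι : Type*} [Fintype ι] {p : ι → ℕ}
    (hp : ∀ i, (p i).Prime) (hinj : Function.Injective p) {a : ι → ℤ} {b : ι → ℕ}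
    (hb : ∀ i, b i ≠ 0) (hcop : ∀ i, IsCoprime (a i) (b i : ℤ)) {m : ℕ} {r : ℚ}
    (h : (∏ i, (p i : ℝ) ^ ((a i : ℝ) / b i)) ^ m = r) (j : ι) : b j ∣ m := by
  set N := Finset.univ.lcm b
  have hrN : r ^ N = ∏ i, (p i : ℚ) ^ ((m : ℤ) * (a i * (N / b i : ℕ))) := by
    have hreal : (r : ℝ) ^ N = ((∏ i, (p i : ℝ) ^ ((a i : ℝ) / b i)) ^ N) ^ m := by
      rw [← h, ← pow_mul, ← pow_mul, mul_comm]
    rw [prod_rpow_div_pow_lcm p a hb] at hreal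
    calc r ^ N = (∏ i, (p i : ℚ) ^ (a i * (N / b i : ℕ))) ^ m := by exact_mod_cast hreal
      _ = _ := by
        rw [← Finset.prod_pow]
        refine Finset.prod_congr rfl fun i _ => ?_
        rw [← zpow_natCast, ← zpow_mul, mul_comm _ (m : ℤ)]
  have hNdvd := intCast_dvd_of_prod_zpow_primes_eq_pow hp hinj hrN.symm j
  have hN : ((b j : ℤ) * (N / b j : ℕ)) = N := by
    exact_mod_cast Nat.mul_div_cancel' (Finset.dvd_lcm (Finset.mem_univ j))
  have hk : ((N / b j : ℕ) : ℤ) ≠ 0 :=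
    right_ne_zero_of_mul (hN ▸ Int.natCast_ne_zero.2 (Finset.lcm_ne_zero_iff.2 fun i _ => hb i))
  rw [← hN, ← mul_assoc] at hNdvd
  have hbma : (b j : ℤ) ∣ m * a j := (mul_dvd_mul_iff_right hk).1 hNdvd
  exact_mod_cast (hcop j).symm.dvd_of_dvd_mul_right hbma

theorem stmt_9_general (s : ℕ) (p : Fin s → ℕ) (hp : ∀ i, (p i).Prime)
    (hinj : Function.Injective p)
    (a : Fin s → ℤ) (b : Fin s → ℕ) (hb : ∀ i, 0 < b i)
    (hcop : ∀ i, IsCoprime (a i) (b i : ℤ)) :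
    IsAlgebraic ℚ (∏ i, (p i : ℝ) ^ ((a i : ℝ) / (b i : ℝ))) ∧
    (minpoly ℚ (∏ i, (p i : ℝ) ^ ((a i : ℝ) / (b i : ℝ)))).natDegree
      = Finset.univ.lcm b := by
  set x := ∏ i, (p i : ℝ) ^ ((a i : ℝ) / (b i : ℝ))
  have hb0 : ∀ i, b i ≠ 0 := fun i => (hb i).ne'
  have hN : Finset.univ.lcm b ≠ 0 := Finset.lcm_ne_zero_iff.2 fun i _ => hb0 i
  have hx : 0 ≤ x := Finset.prod_nonneg fun i _ => Real.rpow_nonneg (Nat.cast_nonneg _) _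
  have hxN := prod_rpow_div_pow_lcm p a hb0
  have hxN' : x ^ Finset.univ.lcm b = algebraMap ℚ ℝ _ := hxN.trans (eq_ratCast _ _).symm
  have hint := isIntegral_of_pow_eq_algebraMap hN hxN'
  have hdvd : Finset.univ.lcm b ∣ (minpoly ℚ x).natDegree :=
    Finset.lcm_dvd fun j _ => dvd_of_prod_rpow_div_pow_eq_ratCast hp hinj hb0 hcop
      (pow_natDegree_minpoly_eq_abs_coeff_zero hx hN hxN) j
  exact ⟨hint.isAlgebraic, le_antisymm (natDegree_minpoly_le_of_pow_eq_algebraMap hN hxN')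
    (Nat.le_of_dvd (minpoly.natDegree_pos hint) hdvd)⟩

theorem stmt_9 (s : ℕ) (p : Fin s → ℕ) (hp : ∀ i, (p i).Prime)
    (hinj : Function.Injective p)
    (a : Fin s → ℤ) (b : Fin s → ℕ) (ha : ∀ i, a i ≠ 0) (hb : ∀ i, 0 < b i)
    (hcop : ∀ i, IsCoprime (a i) (b i : ℤ)) :
    IsAlgebraic ℚ (∏ i, (p i : ℝ) ^ ((a i : ℝ) / (b i : ℝ))) ∧
    (minpoly ℚ (∏ i, (p i : ℝ) ^ ((a i : ℝ) / (b i : ℝ)))).natDegree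
      = Finset.univ.lcm b :=
  stmt_9_general s p hp hinj a b hb hcop
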